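/- arXiv:2112.05070 — 2 statements merged into one kernel-verified Lean document; each statement's English description precedes it below -/
import Mathlib

section
/- Let Γ = (T, τ) be a 2HAM system with strength function str, and let Γ' = (T, 1) be the temperature-1 system over the same tile set with the modified strength function str', where str'(g, g') = 1 if str(g, g') ≥ τ and str'(g, g') = 0 otherwise. If Γ' uniquely produces the assembly A, then A is producible in Γ, i.e., A ∈ P'_Γ. -/
namespace TwoHAM

/-- A tile: a non-rotating unit square with a glue on each of its four sides. -/
structure Tile (Glue : Type) where
  north : Glue
  south : Glue
  east : Glue
  west : Glue

variable {Glue : Type}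

/-- The strength of the abutting glues of tile `t₁` placed at position `p` and tile `t₂`
placed at position `q`; zero if `p` and `q` are not adjacent. -/
def bondStrength (str : Glue → Glue → ℕ) (t₁ t₂ : Tile Glue) (p q : ℤ × ℤ) : ℕ :=
  if q = (p.1 + 1, p.2) then str t₁.east t₂.west
  else if q = (p.1 - 1, p.2) then str t₁.west t₂.east
  else if q = (p.1, p.2 + 1) then str t₁.north t₂.south
  else if q = (p.1, p.2 - 1) then str t₁.south t₂.north
  else 0

/-- A configuration: a partial function from `ℤ²` to tiles with finite nonempty domain. -/
structure Config (Glue : Type) where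
  tiles : ℤ × ℤ → Option (Tile Glue)
  finite : {p : ℤ × ℤ | tiles p ≠ none}.Finite
  nonempty : {p : ℤ × ℤ | tiles p ≠ none}.Nonempty

namespace Config

/-- The domain of a configuration. -/
def dom (C : Config Glue) : Set (ℤ × ℤ) := {p : ℤ × ℤ | C.tiles p ≠ none}

end Config

/-- The glue strength contributed between position `p` of configuration `C₁` and
position `q` of configuration `C₂`. -/
def crossBond (str : Glue → Glue → ℕ) (C₁ C₂ : Config Glue) (p q : ℤ × ℤ) : ℕ :=
  match C₁.tiles p, C₂.tiles q with
  | some t₁, some t₂ => bondStrength str t₁ t₂ p q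
  | _, _ => 0

/-- `(p, q)` is a binding site between configurations `C₁` and `C₂` if the abutting glues
of the tiles of `C₁` at `p` and of `C₂` at `q` have positive strength. -/
def IsBindingSite (str : Glue → Glue → ℕ) (C₁ C₂ : Config Glue) (p q : ℤ × ℤ) : Prop :=
  0 < crossBond str C₁ C₂ p q

namespace Config

/-- The glue strength between positions `p` and `q` within a configuration. -/
def bond (str : Glue → Glue → ℕ) (C : Config Glue) (p q : ℤ × ℤ) : ℕ :=
  crossBond str C C p q

/-- The bond graph of a configuration: adjacent positions with positive abutting glue
strength are joined by an edge. -/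
def bondGraph (str : Glue → Glue → ℕ) (C : Config Glue) : SimpleGraph (ℤ × ℤ) where
  Adj p q := p ≠ q ∧ (0 < C.bond str p q ∨ 0 < C.bond str q p)
  symm := by
    constructor
    rintro p q ⟨h1, h2⟩
    exact ⟨h1.symm, h2.symm⟩
  loopless := by
    constructor
    rintro p ⟨h1, _⟩
    exact h1 rfl

/-- The bond graph of a configuration is connected (all positions of the domain are
mutually reachable). -/
def Connected (str : Glue → Glue → ℕ) (C : Config Glue) : Prop :=
  ∀ p ∈ C.dom, ∀ q ∈ C.dom, (C.bondGraph str).Reachable p q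

/-- The domain of a configuration as a finset. -/
noncomputable def domFinset (C : Config Glue) : Finset (ℤ × ℤ) := C.finite.toFinset

/-- The total weight of the edge cut of the bond graph determined by a set `S`. -/
noncomputable def cutWeight (str : Glue → Glue → ℕ) (C : Config Glue)
    (S : Finset (ℤ × ℤ)) : ℕ :=
  ∑ p ∈ S, ∑ q ∈ C.domFinset \ S, C.bond str p q

/-- A configuration is `τ`-stable if its bond graph is connected and every edge cut has
total weight at least `τ`. -/
def IsStable (str : Glue → Glue → ℕ) (τ : ℕ) (C : Config Glue) : Prop :=
  C.Connected str ∧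
    ∀ S : Finset (ℤ × ℤ), S ⊆ C.domFinset → S.Nonempty → (C.domFinset \ S).Nonempty →
      τ ≤ C.cutWeight str S

/-- The translation of a configuration by a vector `v`. -/
def translate (C : Config Glue) (v : ℤ × ℤ) : Config Glue where
  tiles p := C.tiles (p - v)
  finite := by
    have h : {p : ℤ × ℤ | C.tiles (p - v) ≠ none} =
        (fun q : ℤ × ℤ => q + v) '' {p : ℤ × ℤ | C.tiles p ≠ none} := by
      ext p
      constructor
      · intro hp
        exact ⟨p - v, hp, sub_add_cancel p v⟩
      · rintro ⟨q, hq, rfl⟩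
        simpa using hq
    rw [h]
    exact C.finite.image _
  nonempty := by
    obtain ⟨p, hp⟩ := C.nonempty
    exact ⟨p + v, by simpa using hp⟩

/-- `C₁` is a restriction of `C₂`. -/
def Subconfig (C₁ C₂ : Config Glue) : Prop :=
  ∀ p : ℤ × ℤ, C₁.tiles p ≠ none → C₁.tiles p = C₂.tiles p

/-- A configuration is tree-bonded if its bond graph is a tree (connected and acyclic). -/
def IsTreeBonded (str : Glue → Glue → ℕ) (C : Config Glue) : Prop :=
  C.Connected str ∧ (C.bondGraph str).IsAcyclic

end Config

/-- The assembly of a configuration: the set of all of its translations. -/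
def asmOf (C : Config Glue) : Set (Config Glue) := {C' | ∃ v : ℤ × ℤ, C' = C.translate v}

/-- A set of configurations is an assembly if it is the set of all translations of some
configuration. -/
def IsAssembly (A : Set (Config Glue)) : Prop := ∃ C : Config Glue, A = asmOf C

/-- An assembly is `τ`-stable if its configurations are. -/
def IsStableAssembly (str : Glue → Glue → ℕ) (τ : ℕ) (A : Set (Config Glue)) : Prop :=
  ∀ C ∈ A, C.IsStable str τ

/-- An assembly is tree-bonded if the bond graph of its configurations is a tree. -/
def IsTreeBondedAssembly (str : Glue → Glue → ℕ) (A : Set (Config Glue)) : Prop :=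
  ∀ C ∈ A, C.IsTreeBonded str

/-- `A ⊑ B`: some configuration of `A` is a restriction of some configuration of `B`. -/
def Subassembly (A B : Set (Config Glue)) : Prop :=
  ∃ C₁ ∈ A, ∃ C₂ ∈ B, Config.Subconfig C₁ C₂

/-- Union of two partial tile maps (preferring the first). -/
def optOr {α : Type} (a b : Option α) : Option α :=
  match a with
  | some x => some x
  | none => b

/-- Assemblies `A` and `B` are `τ`-combinable into `C`. -/
def Combinable (str : Glue → Glue → ℕ) (τ : ℕ) (A B C : Set (Config Glue)) : Prop :=
  ∃ CA ∈ A, ∃ CB ∈ B, ∃ CC ∈ C,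
    (∀ p : ℤ × ℤ, CC.tiles p = optOr (CA.tiles p) (CB.tiles p)) ∧
    CA.dom ∩ CB.dom = ∅ ∧
    CC.IsStable str τ

/-- The configuration consisting of a single tile `t` at the origin. -/
def singletonConfig (t : Tile Glue) : Config Glue where
  tiles p := if p = ((0 : ℤ), (0 : ℤ)) then some t else none
  finite := by
    apply Set.Finite.subset (Set.finite_singleton ((0 : ℤ), (0 : ℤ)))
    intro p hp
    by_cases h : p = ((0 : ℤ), (0 : ℤ)) <;> simp_all
  nonempty := ⟨((0 : ℤ), (0 : ℤ)), by simp⟩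

/-- The producible assemblies of the 2HAM system `Γ = (T, τ)`. -/
inductive Producible (str : Glue → Glue → ℕ) (T : Set (Tile Glue)) (τ : ℕ) :
    Set (Config Glue) → Prop
  | single (t : Tile Glue) (ht : t ∈ T) : Producible str T τ (asmOf (singletonConfig t))
  | combine {A B C : Set (Config Glue)} : Producible str T τ A → Producible str T τ B →
      Combinable str τ A B C → Producible str T τ C

/-- A producible assembly is terminal if it is not `τ`-combinable with any producible
assembly. -/
def Terminal (str : Glue → Glue → ℕ) (T : Set (Tile Glue)) (τ : ℕ)
    (A : Set (Config Glue)) : Prop :=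
  Producible str T τ A ∧
    ∀ B C : Set (Config Glue), Producible str T τ B → ¬ Combinable str τ A B C

/-- `Γ = (T, τ)` uniquely produces `A`. -/
def UniquelyProduces (str : Glue → Glue → ℕ) (T : Set (Tile Glue)) (τ : ℕ)
    (A : Set (Config Glue)) : Prop :=
  (∀ X : Set (Config Glue), Terminal str T τ X ↔ X = A) ∧
    ∀ B : Set (Config Glue), Producible str T τ B → Subassembly B A

/-- The modified strength function of the noncooperative (temperature 1) system:
strength `1` exactly for glue pairs of strength at least `τ`. -/
def capStr (str : Glue → Glue → ℕ) (τ : ℕ) : Glue → Glue → ℕ :=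
  fun g g' => if τ ≤ str g g' then 1 else 0

/-- A `τ`-combination that uses cooperative binding: every binding site between the two
combined configurations has strength strictly less than `τ`. -/
def CombinableCoop (str : Glue → Glue → ℕ) (τ : ℕ) (A B C : Set (Config Glue)) : Prop :=
  ∃ CA ∈ A, ∃ CB ∈ B, ∃ CC ∈ C,
    (∀ p : ℤ × ℤ, CC.tiles p = optOr (CA.tiles p) (CB.tiles p)) ∧
    CA.dom ∩ CB.dom = ∅ ∧
    CC.IsStable str τ ∧
    ∀ p q : ℤ × ℤ, crossBond str CA CB p q < τ

end TwoHAM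

namespace TwoHAM

/-!
A bond of positive strength under `capStr str τ` is a bond of strength at least `τ` under
`str`. Hence in a configuration that is `1`-stable for `capStr str τ`, the bond graph for
`str` contains the connected bond graph for `capStr str τ`, and every cut, containing a
`capStr` bond, already carries weight `τ` for `str`. So every combination in `Γ'` is one in
`Γ`, the producible assemblies of `Γ'` are producible in `Γ`, and `A`, being terminal in
`Γ'`, is producible there.
-/

variable {Glue : Type}

lemma le_bondStrength_of_capStr_pos {str : Glue → Glue → ℕ} {τ : ℕ} {t₁ t₂ : Tile Glue}
    {p q : ℤ × ℤ} (h : 0 < bondStrength (capStr str τ) t₁ t₂ p q) :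
    τ ≤ bondStrength str t₁ t₂ p q := by
  unfold bondStrength capStr at *
  split_ifs at h ⊢ <;> omega

namespace Config

lemma le_bond_of_capStr_pos {str : Glue → Glue → ℕ} {τ : ℕ} {C : Config Glue}
    {p q : ℤ × ℤ} (h : 0 < C.bond (capStr str τ) p q) : τ ≤ C.bond str p q := by
  unfold bond crossBond at *
  cases hp : C.tiles p <;> cases hq : C.tiles q <;> simp only [hp, hq, lt_irrefl] at h ⊢
  exact le_bondStrength_of_capStr_pos h

lemma bondGraph_capStr_le {str : Glue → Glue → ℕ} {τ : ℕ} (hτ : 0 < τ) (C : Config Glue) :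
    C.bondGraph (capStr str τ) ≤ C.bondGraph str := by
  rintro p q ⟨hne, hpq | hqp⟩
  · exact ⟨hne, .inl (hτ.trans_le (le_bond_of_capStr_pos hpq))⟩
  · exact ⟨hne, .inr (hτ.trans_le (le_bond_of_capStr_pos hqp))⟩

lemma bond_le_cutWeight (str : Glue → Glue → ℕ) (C : Config Glue) {S : Finset (ℤ × ℤ)}
    {p q : ℤ × ℤ} (hp : p ∈ S) (hq : q ∈ C.domFinset \ S) :
    C.bond str p q ≤ C.cutWeight str S :=
  calc C.bond str p q ≤ ∑ q ∈ C.domFinset \ S, C.bond str p q :=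
        Finset.single_le_sum (fun _ _ => Nat.zero_le _) hq
    _ ≤ C.cutWeight str S :=
        Finset.single_le_sum (f := fun p => ∑ q ∈ C.domFinset \ S, C.bond str p q)
          (fun _ _ => Nat.zero_le _) hp

lemma le_cutWeight_of_capStr_pos {str : Glue → Glue → ℕ} {τ : ℕ} {C : Config Glue}
    {S : Finset (ℤ × ℤ)} (h : 0 < C.cutWeight (capStr str τ) S) :
    τ ≤ C.cutWeight str S := by
  obtain ⟨p, hp, hsum⟩ := Finset.sum_pos_iff.mp h
  obtain ⟨q, hq, hpq⟩ := Finset.sum_pos_iff.mp hsum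
  exact (le_bond_of_capStr_pos hpq).trans (C.bond_le_cutWeight str hp hq)

lemma IsStable.of_capStr {str : Glue → Glue → ℕ} {τ : ℕ} (hτ : 0 < τ) {C : Config Glue}
    (h : C.IsStable (capStr str τ) 1) : C.IsStable str τ :=
  ⟨fun p hp q hq => (h.1 p hp q hq).mono (C.bondGraph_capStr_le hτ),
    fun S hS hne hne' => le_cutWeight_of_capStr_pos (h.2 S hS hne hne')⟩

end Config

lemma Combinable.of_capStr {str : Glue → Glue → ℕ} {τ : ℕ} (hτ : 0 < τ)
    {A B C : Set (Config Glue)} (h : Combinable (capStr str τ) 1 A B C) :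
    Combinable str τ A B C := by
  obtain ⟨CA, hCA, CB, hCB, CC, hCC, hunion, hdisj, hstable⟩ := h
  exact ⟨CA, hCA, CB, hCB, CC, hCC, hunion, hdisj, hstable.of_capStr hτ⟩

lemma Producible.of_capStr {str : Glue → Glue → ℕ} {T : Set (Tile Glue)} {τ : ℕ}
    (hτ : 0 < τ) {A : Set (Config Glue)} (h : Producible (capStr str τ) T 1 A) :
    Producible str T τ A := by
  induction h with
  | single t ht => exact .single t ht
  | combine _ _ hcomb ihA ihB => exact .combine ihA ihB (hcomb.of_capStr hτ)

theorem producible_of_noncoop_unique_general {Glue : Type}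
    (str : Glue → Glue → ℕ)
    (T : Set (Tile Glue)) (τ : ℕ) (hτ : 0 < τ)
    (A : Set (Config Glue))
    (huniq : UniquelyProduces (capStr str τ) T 1 A) :
    Producible str T τ A :=
  ((huniq.1 A).mpr rfl).1.of_capStr hτ

/-- If the temperature-1 system `Γ' = (T, 1)` with the modified strength
function `capStr str τ` uniquely produces the assembly `A`, then `A` is producible in
`Γ = (T, τ)`. -/
theorem producible_of_noncoop_unique {Glue : Type} [Fintype Glue]
    (str : Glue → Glue → ℕ) (hsym : ∀ g g' : Glue, str g g' = str g' g)
    (T : Set (Tile Glue)) (hT : T.Finite) (τ : ℕ) (hτ : 0 < τ)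
    (A : Set (Config Glue))
    (huniq : UniquelyProduces (capStr str τ) T 1 A) :
    Producible str T τ A :=
  producible_of_noncoop_unique_general str T τ hτ A huniq

end TwoHAM
end

section
/- Let A be a tree-bonded assembly with fixed configuration A₀, let v ∈ ℤ², and let b₁ = (p₁, q₁) and b₂ = (p₂, q₂) be two distinct binding sites between A₀ and A₀ + v. Let P₁ be the unique path between p₁ and p₂ in the bond graph of A₀ and P₂ the unique path between q₁ and q₂ in the bond graph of A₀ + v, and suppose the position sets of P₁ and P₂ are disjoint. Then the configuration C̃ obtained as the union of the restriction of A₀ to the positions of P₁ and the restriction of A₀ + v to the positions of P₂ is 2-stable, and the assembly of C̃ is not a subassembly of A. -/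
namespace SimpleGraph.Walk

variable {V : Type*} {G : SimpleGraph V}

theorem IsPath.isCycle_cons_append_cons_reverse {p₁ p₂ q₁ q₂ : V} {W₁ : G.Walk p₁ p₂}
    {W₂ : G.Walk q₁ q₂} (hW₁ : W₁.IsPath) (hW₂ : W₂.IsPath)
    (hdisj : W₁.support.Disjoint W₂.support) (h₁ : G.Adj p₁ q₁) (h₂ : G.Adj q₂ p₂)
    (hne : (p₁, q₁) ≠ (p₂, q₂)) :
    (cons h₁ (W₂.append (cons h₂ W₁.reverse))).IsCycle := by
  refine (cons_isCycle_iff _ h₁).2 ⟨?_, ?_⟩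
  · rw [isPath_def, support_append, support_cons, List.tail_cons, support_reverse]
    exact hW₂.support_nodup.append (List.nodup_reverse.2 hW₁.support_nodup)
      fun x hx₂ hx₁ => hdisj (List.mem_reverse.1 hx₁) hx₂
  · have hp₁ := W₁.start_mem_support
    have hq₁ := W₂.start_mem_support
    simp only [edges_append, edges_cons, edges_reverse, List.mem_append, List.mem_cons,
      List.mem_reverse, Sym2.eq_iff, not_or]
    refine ⟨fun h => hdisj hp₁ (W₂.fst_mem_support_of_mem_edges h), ⟨?_, ?_⟩,
      fun h => hdisj (W₁.snd_mem_support_of_mem_edges h) hq₁⟩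
    · rintro ⟨rfl, -⟩
      exact hdisj hp₁ W₂.end_mem_support
    · rintro ⟨rfl, rfl⟩
      exact hne rfl

theorem IsTrail.exists_boundary_darts [DecidableEq V] {u a b : V} {c : G.Walk u u}
    (hc : c.IsTrail) (S : Set V) (ha : a ∈ c.support) (hb : b ∈ c.support) (haS : a ∈ S)
    (hbS : b ∉ S) :
    ∃ d₁ d₂ : G.Dart, d₁.edge ≠ d₂.edge ∧ d₁.fst ∈ S ∧ d₁.snd ∉ S ∧ d₂.fst ∈ S ∧ d₂.snd ∉ S := by
  -- one crossing on each of the two arcs between `a` and `b`, which share no edge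
  set c' := c.rotate a ha
  have hb' : b ∈ c'.support := (mem_support_rotate_iff c a ha).2 hb
  obtain ⟨d₁, hd₁, hd₁S⟩ := (c'.takeUntil b hb').exists_boundary_dart S haS hbS
  obtain ⟨d₂, hd₂, hd₂S, hd₂S'⟩ :=
    (c'.dropUntil b hb').exists_boundary_dart Sᶜ hbS (Set.notMem_compl_iff.2 haS)
  refine ⟨d₁, d₂.symm, fun h => ?_, hd₁S.1, hd₁S.2, Set.notMem_compl_iff.1 hd₂S', hd₂S⟩
  rw [Dart.edge_symm] at h
  exact (hc.rotate ha).disjoint_edges_takeUntil_dropUntil hb' (List.mem_map_of_mem hd₁)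
    (h ▸ List.mem_map_of_mem hd₂)

end SimpleGraph.Walk

namespace TwoHAM

variable {Glue : Type} {str : Glue → Glue → ℕ}

open SimpleGraph

theorem bondStrength_symm (hsym : ∀ g g' : Glue, str g g' = str g' g)
    (t₁ t₂ : Tile Glue) (p q : ℤ × ℤ) :
    bondStrength str t₁ t₂ p q = bondStrength str t₂ t₁ q p := by
  obtain ⟨a, b⟩ := p; obtain ⟨c, d⟩ := q
  unfold bondStrength
  simp only [Prod.mk.injEq]
  split_ifs <;> first | rfl | apply hsym | omega

theorem bondStrength_add (t₁ t₂ : Tile Glue) (p q w : ℤ × ℤ) :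
    bondStrength str t₁ t₂ (p + w) (q + w) = bondStrength str t₁ t₂ p q := by
  obtain ⟨a, b⟩ := p; obtain ⟨c, d⟩ := q; obtain ⟨e, f⟩ := w
  unfold bondStrength
  simp only [Prod.mk_add_mk, Prod.mk.injEq]
  split_ifs <;> first | rfl | omega

theorem bondStrength_self (t₁ t₂ : Tile Glue) (p : ℤ × ℤ) : bondStrength str t₁ t₂ p p = 0 := by
  unfold bondStrength
  simp only [Prod.ext_iff]
  split_ifs <;> omega

theorem crossBond_congr {C₁ C₂ D₁ D₂ : Config Glue} {p q : ℤ × ℤ}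
    (h₁ : C₁.tiles p = D₁.tiles p) (h₂ : C₂.tiles q = D₂.tiles q) :
    crossBond str C₁ C₂ p q = crossBond str D₁ D₂ p q := by
  unfold crossBond
  rw [h₁, h₂]

theorem crossBond_symm (hsym : ∀ g g' : Glue, str g g' = str g' g)
    (C₁ C₂ : Config Glue) (p q : ℤ × ℤ) :
    crossBond str C₁ C₂ p q = crossBond str C₂ C₁ q p := by
  unfold crossBond
  rcases C₁.tiles p with _ | t₁ <;> rcases C₂.tiles q with _ | t₂ <;>
    simp [bondStrength_symm hsym]

theorem mem_dom_left_of_crossBond_pos {C₁ C₂ : Config Glue} {p q : ℤ × ℤ}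
    (h : 0 < crossBond str C₁ C₂ p q) : p ∈ C₁.dom := by
  intro hp
  unfold crossBond at h
  rw [hp] at h
  exact h.ne' rfl

theorem mem_dom_right_of_crossBond_pos {C₁ C₂ : Config Glue} {p q : ℤ × ℤ}
    (h : 0 < crossBond str C₁ C₂ p q) : q ∈ C₂.dom := by
  intro hq
  unfold crossBond at h
  rw [hq] at h
  split at h
  · contradiction
  · exact h.ne' rfl

theorem ne_of_crossBond_pos {C₁ C₂ : Config Glue} {p q : ℤ × ℤ}
    (h : 0 < crossBond str C₁ C₂ p q) : p ≠ q := by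
  rintro rfl
  unfold crossBond at h
  split at h
  · exact h.ne' (bondStrength_self _ _ p)
  · exact h.ne' rfl

namespace Config

@[simp]
theorem mem_domFinset {C : Config Glue} {p : ℤ × ℤ} : p ∈ C.domFinset ↔ p ∈ C.dom :=
  Set.Finite.mem_toFinset _

theorem bond_pos_of_adj (hsym : ∀ g g' : Glue, str g g' = str g' g) {C : Config Glue}
    {p q : ℤ × ℤ} (h : (C.bondGraph str).Adj p q) : 0 < C.bond str p q := by
  rcases h.2 with h | h
  · exact h
  · rwa [bond, crossBond_symm hsym]

theorem bondGraph_adj_congr {C D : Config Glue} {p q : ℤ × ℤ}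
    (hp : C.tiles p = D.tiles p) (hq : C.tiles q = D.tiles q) :
    (C.bondGraph str).Adj p q ↔ (D.bondGraph str).Adj p q := by
  simp only [bondGraph, bond, crossBond_congr hp hq, crossBond_congr hq hp]

theorem bondGraph_adj_of_crossBond_pos {C C₁ C₂ : Config Glue} {p q : ℤ × ℤ}
    (h : 0 < crossBond str C₁ C₂ p q) (hp : C.tiles p = C₁.tiles p)
    (hq : C.tiles q = C₂.tiles q) : (C.bondGraph str).Adj p q :=
  ⟨ne_of_crossBond_pos h, Or.inl (by rwa [bond, crossBond_congr hp hq])⟩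

theorem edges_subset_edgeSet_of_tiles_eq {C D : Config Glue} {x y : ℤ × ℤ}
    (W : (D.bondGraph str).Walk x y) (h : ∀ p ∈ W.support, C.tiles p = D.tiles p) :
    ∀ e ∈ W.edges, e ∈ (C.bondGraph str).edgeSet := by
  intro e he
  induction e using Sym2.ind with
  | h p q =>
    exact (bondGraph_adj_congr (h p (W.fst_mem_support_of_mem_edges he))
      (h q (W.snd_mem_support_of_mem_edges he))).2 (W.adj_of_mem_edges he)

theorem bond_translate (C : Config Glue) (w p q : ℤ × ℤ) :
    (C.translate w).bond str (p + w) (q + w) = C.bond str p q := by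
  unfold bond crossBond translate
  simp only [add_sub_cancel_right, bondStrength_add]

def translateHom (C : Config Glue) (w : ℤ × ℤ) :
    C.bondGraph str →g (C.translate w).bondGraph str where
  toFun p := p + w
  map_rel' {p q} h := ⟨fun hpq => h.1 (add_right_cancel hpq), by simpa [bond_translate] using h.2⟩

theorem Subconfig.bond_eq {C D : Config Glue} (h : C.Subconfig D) {p q : ℤ × ℤ}
    (hpq : 0 < C.bond str p q) : D.bond str p q = C.bond str p q :=
  crossBond_congr (h p (mem_dom_left_of_crossBond_pos hpq)).symm
    (h q (mem_dom_right_of_crossBond_pos hpq)).symm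

theorem Subconfig.bondGraph_le {C D : Config Glue} (h : C.Subconfig D) :
    C.bondGraph str ≤ D.bondGraph str := by
  rintro p q ⟨hne, hpq | hqp⟩
  · exact ⟨hne, Or.inl (h.bond_eq hpq ▸ hpq)⟩
  · exact ⟨hne, Or.inr (h.bond_eq hqp ▸ hqp)⟩

theorem bond_add_bond_le_cutWeight (C : Config Glue) {S : Finset (ℤ × ℤ)} {u₁ z₁ u₂ z₂ : ℤ × ℤ}
    (hne : (u₁, z₁) ≠ (u₂, z₂)) (h₁ : (u₁, z₁) ∈ S ×ˢ (C.domFinset \ S))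
    (h₂ : (u₂, z₂) ∈ S ×ˢ (C.domFinset \ S)) :
    C.bond str u₁ z₁ + C.bond str u₂ z₂ ≤ C.cutWeight str S := by
  rw [cutWeight, ← Finset.sum_product', ← Finset.sum_pair (f := fun x => C.bond str x.1 x.2) hne]
  exact Finset.sum_le_sum_of_subset (Finset.insert_subset h₁ (Finset.singleton_subset_iff.2 h₂))

theorem isStable_two_of_isTrail (hsym : ∀ g g' : Glue, str g g' = str g' g) {C : Config Glue}
    {u : ℤ × ℤ} {c : (C.bondGraph str).Walk u u} (hc : c.IsTrail)
    (hdom : C.dom ⊆ {x | x ∈ c.support}) : C.IsStable str 2 := by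
  refine ⟨fun x hx y hy => (c.takeUntil x (hdom hx)).reachable.symm.trans
    (c.takeUntil y (hdom hy)).reachable, fun S hS ⟨a, ha⟩ ⟨b, hb⟩ => ?_⟩
  obtain ⟨hbdom, hbS⟩ := Finset.mem_sdiff.1 hb
  obtain ⟨d₁, d₂, hne, hd₁S, hd₁S', hd₂S, hd₂S'⟩ :=
    hc.exists_boundary_darts (S : Set (ℤ × ℤ)) (hdom (mem_domFinset.1 (hS ha)))
      (hdom (mem_domFinset.1 hbdom)) ha hbS
  have hcross : ∀ d : (C.bondGraph str).Dart, d.snd ∉ S → d.snd ∈ C.domFinset \ S :=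
    fun d hd => Finset.mem_sdiff.2
      ⟨mem_domFinset.2 (d.adj.2.elim mem_dom_right_of_crossBond_pos
        mem_dom_left_of_crossBond_pos), hd⟩
  calc 2 ≤ C.bond str d₁.fst d₁.snd + C.bond str d₂.fst d₂.snd :=
        Nat.add_le_add (bond_pos_of_adj hsym d₁.adj) (bond_pos_of_adj hsym d₂.adj)
    _ ≤ C.cutWeight str S :=
        C.bond_add_bond_le_cutWeight (fun h => hne (congrArg Dart.edge (Dart.ext _ _ h)))
          (Finset.mem_product.2 ⟨hd₁S, hcross d₁ hd₁S'⟩)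
          (Finset.mem_product.2 ⟨hd₂S, hcross d₂ hd₂S'⟩)

end Config

theorem not_subassembly_asmOf_of_not_isAcyclic {C : Config Glue}
    (hC : ¬ (C.bondGraph str).IsAcyclic) {A : Set (Config Glue)}
    (hA : IsTreeBondedAssembly str A) : ¬ Subassembly (asmOf C) A := by
  rintro ⟨_, ⟨w, rfl⟩, D, hD, hsub⟩
  exact hC (((hA D hD).2.anti hsub.bondGraph_le).comap (C.translateHom w)
    (add_left_injective w))

theorem loop_gives_rogue_general {Glue : Type}
    (str : Glue → Glue → ℕ) (hsym : ∀ g g' : Glue, str g g' = str g' g)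
    (A : Set (Config Glue)) (A₀ : Config Glue)
    (htree : IsTreeBondedAssembly str A)
    (v : ℤ × ℤ) (p₁ q₁ p₂ q₂ : ℤ × ℤ)
    (hb₁ : IsBindingSite str A₀ (A₀.translate v) p₁ q₁)
    (hb₂ : IsBindingSite str A₀ (A₀.translate v) p₂ q₂)
    (hne : ((p₁, q₁) : (ℤ × ℤ) × (ℤ × ℤ)) ≠ (p₂, q₂))
    (W₁ : (A₀.bondGraph str).Walk p₁ p₂) (hW₁ : W₁.IsPath)
    (W₂ : ((A₀.translate v).bondGraph str).Walk q₁ q₂) (hW₂ : W₂.IsPath)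
    (hdisj : ∀ x ∈ W₁.support, x ∉ W₂.support)
    (C' : Config Glue)
    (hC' : ∀ p : ℤ × ℤ, C'.tiles p =
      if p ∈ W₁.support then A₀.tiles p
      else if p ∈ W₂.support then (A₀.translate v).tiles p
      else none) :
    C'.IsStable str 2 ∧ ¬ Subassembly (asmOf C') A := by
  have hC'₁ : ∀ p ∈ W₁.support, C'.tiles p = A₀.tiles p := fun p hp => by rw [hC', if_pos hp]
  have hC'₂ : ∀ p ∈ W₂.support, C'.tiles p = (A₀.translate v).tiles p := fun p hp => by
    rw [hC', if_neg fun h => hdisj p h hp, if_pos hp]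
  have h₁ := Config.bondGraph_adj_of_crossBond_pos hb₁ (hC'₁ p₁ W₁.start_mem_support)
    (hC'₂ q₁ W₂.start_mem_support)
  have h₂ := Config.bondGraph_adj_of_crossBond_pos hb₂ (hC'₁ p₂ W₁.end_mem_support)
    (hC'₂ q₂ W₂.end_mem_support)
  have hW₁' := Config.edges_subset_edgeSet_of_tiles_eq W₁ hC'₁
  have hW₂' := Config.edges_subset_edgeSet_of_tiles_eq W₂ hC'₂
  set c := Walk.cons h₁ ((W₂.transfer _ hW₂').append (.cons h₂.symm (W₁.transfer _ hW₁').reverse))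
  have hc : c.IsCycle := (hW₁.transfer hW₁').isCycle_cons_append_cons_reverse
    (hW₂.transfer hW₂') (by
      rw [Walk.support_transfer, Walk.support_transfer]
      exact fun x hx₁ hx₂ => hdisj x hx₁ hx₂) h₁ h₂.symm hne
  have hdom : C'.dom ⊆ {x | x ∈ c.support} := by
    intro x hx
    by_cases hx₁ : x ∈ W₁.support
    · simp [c, Walk.support_append, Walk.support_transfer, hx₁]
    by_cases hx₂ : x ∈ W₂.support
    · simp [c, Walk.support_append, Walk.support_transfer, hx₂]
    exact absurd (by rw [hC', if_neg hx₁, if_neg hx₂]) hx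
  exact ⟨Config.isStable_two_of_isTrail hsym hc.isCircuit.isTrail hdom,
    not_subassembly_asmOf_of_not_isAcyclic (fun h => h c hc) htree⟩

/-- Let `A` be a tree-bonded assembly with fixed configuration `A₀`, and
let `(p₁, q₁) ≠ (p₂, q₂)` be binding sites between `A₀` and `A₀ + v`. If the unique path
`W₁` from `p₁` to `p₂` in the bond graph of `A₀` and the unique path `W₂` from `q₁` to
`q₂` in the bond graph of `A₀ + v` have disjoint position sets, then the configuration
obtained as the union of the restriction of `A₀` to the positions of `W₁` and the
restriction of `A₀ + v` to the positions of `W₂` is `2`-stable, and its assembly is not a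
subassembly of `A`. -/
theorem loop_gives_rogue {Glue : Type} [Fintype Glue]
    (str : Glue → Glue → ℕ) (hsym : ∀ g g' : Glue, str g g' = str g' g)
    (A : Set (Config Glue)) (A₀ : Config Glue)
    (hA : A = asmOf A₀) (htree : IsTreeBondedAssembly str A)
    (v : ℤ × ℤ) (p₁ q₁ p₂ q₂ : ℤ × ℤ)
    (hb₁ : IsBindingSite str A₀ (A₀.translate v) p₁ q₁)
    (hb₂ : IsBindingSite str A₀ (A₀.translate v) p₂ q₂)
    (hne : ((p₁, q₁) : (ℤ × ℤ) × (ℤ × ℤ)) ≠ (p₂, q₂))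
    (W₁ : (A₀.bondGraph str).Walk p₁ p₂) (hW₁ : W₁.IsPath)
    (W₂ : ((A₀.translate v).bondGraph str).Walk q₁ q₂) (hW₂ : W₂.IsPath)
    (hdisj : ∀ x ∈ W₁.support, x ∉ W₂.support)
    (C' : Config Glue)
    (hC' : ∀ p : ℤ × ℤ, C'.tiles p =
      if p ∈ W₁.support then A₀.tiles p
      else if p ∈ W₂.support then (A₀.translate v).tiles p
      else none) :
    C'.IsStable str 2 ∧ ¬ Subassembly (asmOf C') A :=
  loop_gives_rogue_general str hsym A A₀ htree v p₁ q₁ p₂ q₂ hb₁ hb₂ hne W₁ hW₁ W₂ hW₂ hdisj C' hC'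

end TwoHAM
end
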